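/- If y is Negative Binomial(s, p)-distributed (number of failures before the s-th success), then v(t) = (s·t + t^2)/(s + 1) satisfies E[v(y)] = V[y]. -/

import Mathlib

open MeasureTheory ProbabilityTheory Finset

/-!
The falling factorial moments of the negative binomial law are
`E[y (y-1) ⋯ (y-j+1)] = s (s+1) ⋯ (s+j-1) (p/(1-p))^j`: multiplying the weight
`C(m+k, k) p^m` (with `s = k + 1`) by `m (m-1) ⋯ (m-j+1)` turns it into a multiple of
`C(m+k, k+j) p^m`, which is again a negative binomial series `∑ C(n+k, k) r^n = (1-r)^{-(k+1)}`.
With `θ = s p/(1-p)` this gives `E[y²] = θ + (s+1) θ²/s`, so both `V[y]` and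
`E[(s y + y²)/(s+1)]` equal `θ + θ²/s`.
-/

section Countable

variable {X E : Type*} [MeasurableSpace X] [Countable X] [MeasurableSingletonClass X]
  {μ : Measure X} [IsFiniteMeasure μ]

lemma integrable_of_summable_measureReal_mul_norm [NormedAddCommGroup E] {f : X → E}
    (hf : Summable fun x ↦ μ.real {x} * ‖f x‖) : Integrable f μ := by
  rw [← Measure.sum_smul_dirac μ]
  exact integrable_sum_dirac (fun _ ↦ measure_ne_top μ _) hf

lemma integrable_and_integral_eq_of_hasSum_measureReal_mul {f : X → ℝ} {a : ℝ}
    (hf : ∀ x, 0 ≤ f x) (h : HasSum (fun x ↦ μ.real {x} * f x) a) :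
    Integrable f μ ∧ ∫ x, f x ∂μ = a := by
  have hint : Integrable f μ := integrable_of_summable_measureReal_mul_norm <| h.summable.congr
    fun x ↦ by rw [Real.norm_of_nonneg (hf x)]
  exact ⟨hint, (integral_countable hint).trans h.tsum_eq⟩

end Countable

theorem Nat.descFactorial_mul_add_choose (m k j : ℕ) :
    m.descFactorial j * (m + k).choose k = (k + j).descFactorial j * (m + k).choose (k + j) := by
  have h := Nat.choose_mul (n := m + k) (k := k + j) (Nat.le_add_right k j)
  rw [Nat.add_sub_cancel, Nat.add_sub_cancel_left] at h
  rw [Nat.descFactorial_eq_factorial_mul_choose, Nat.descFactorial_eq_factorial_mul_choose,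
    ← Nat.choose_symm_add (a := k), mul_assoc, mul_assoc, mul_comm ((k + j).choose k), h,
    mul_comm (m.choose j)]

section Geometric

variable {𝕜 : Type*} [NormedField 𝕜] {r : 𝕜}

lemma hasSum_add_choose_mul_geometric_of_norm_lt_one (k j : ℕ) (hr : ‖r‖ < 1) :
    HasSum (fun m ↦ ((m + k).choose (k + j) : 𝕜) * r ^ m) (r ^ j / (1 - r) ^ (k + j + 1)) := by
  rw [← hasSum_nat_add_iff' j]
  have hlow : ∑ m ∈ range j, ((m + k).choose (k + j) : 𝕜) * r ^ m = 0 :=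
    sum_eq_zero fun m hm ↦ by
      rw [Nat.choose_eq_zero_of_lt (by have := mem_range.1 hm; omega), Nat.cast_zero, zero_mul]
  rw [hlow, sub_zero]
  have h := (hasSum_choose_mul_geometric_of_norm_lt_one (k + j) hr).mul_left (r ^ j)
  rw [mul_one_div] at h
  refine h.congr_fun fun m ↦ ?_
  rw [show m + j + k = m + (k + j) by ring, pow_add]
  ring

end Geometric

section NegBinomial

variable {𝕜 : Type*} [NormedField 𝕜] {s : ℕ} {p : 𝕜}

def negBinomialWeight (s : ℕ) (p : 𝕜) (m : ℕ) : 𝕜 :=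
  (m + s - 1).choose m * p ^ m * (1 - p) ^ s

theorem hasSum_negBinomialWeight_mul_descFactorial (hs : 1 ≤ s) (hp : ‖p‖ < 1) (j : ℕ) :
    HasSum (fun m ↦ negBinomialWeight s p m * m.descFactorial j)
      (s.ascFactorial j * (p / (1 - p)) ^ j) := by
  obtain ⟨k, rfl⟩ : ∃ k, s = k + 1 := ⟨s - 1, by omega⟩
  have hp1 : 1 - p ≠ 0 := sub_ne_zero.mpr fun h ↦ by simp [← h] at hp
  have h := (hasSum_add_choose_mul_geometric_of_norm_lt_one k j hp).mul_left
    ((k + j).descFactorial j * (1 - p) ^ (k + 1))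
  have hval : (((k + j).descFactorial j : ℕ) : 𝕜) * (1 - p) ^ (k + 1) *
      (p ^ j / (1 - p) ^ (k + j + 1)) = (k + j).descFactorial j * (p / (1 - p)) ^ j := by
    rw [div_pow, show k + j + 1 = j + (k + 1) by ring, pow_add]
    field_simp
    ring
  rw [← Nat.add_descFactorial_eq_ascFactorial, ← hval]
  refine h.congr_fun fun m ↦ ?_
  have hc : ((m.descFactorial j * (m + k).choose k : ℕ) : 𝕜)
      = (((k + j).descFactorial j * (m + k).choose (k + j) : ℕ) : 𝕜) := by
    rw [Nat.descFactorial_mul_add_choose]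
  push_cast at hc
  rw [negBinomialWeight, show m + (k + 1) - 1 = m + k by omega, Nat.choose_symm_add]
  linear_combination p ^ m * (1 - p) ^ (k + 1) * hc

theorem hasSum_negBinomialWeight_mul_self (hs : 1 ≤ s) (hp : ‖p‖ < 1) :
    HasSum (fun m ↦ negBinomialWeight s p m * m) (s * (p / (1 - p))) := by
  simpa [Nat.ascFactorial_succ] using hasSum_negBinomialWeight_mul_descFactorial hs hp 1

theorem hasSum_negBinomialWeight_mul_sq (hs : 1 ≤ s) (hp : ‖p‖ < 1) :
    HasSum (fun m ↦ negBinomialWeight s p m * (m : 𝕜) ^ 2)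
      (s * (s + 1) * (p / (1 - p)) ^ 2 + s * (p / (1 - p))) := by
  have h := (hasSum_negBinomialWeight_mul_descFactorial hs hp 2).add
    (hasSum_negBinomialWeight_mul_descFactorial hs hp 1)
  have hsq : ∀ m : ℕ, m.descFactorial 2 + m.descFactorial 1 = m ^ 2 := by
    rintro (_ | m) <;> simp [Nat.descFactorial_succ]; ring
  simp only [Nat.ascFactorial_succ, Nat.ascFactorial_zero] at h
  convert h using 1
  · ext m
    rw [← mul_add, ← Nat.cast_add, hsq, Nat.cast_pow]
  · push_cast
    ring

end NegBinomial

/-- For `y` negative binomially distributed (number of failures before the `s`-th success,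
success probability... parametrized so that `P(y = m) = C(m+s-1, m) p^m (1-p)^s`),
the function `v(t) = (s t + t²)/(s + 1)` satisfies `E[v(y)] = V[y]`. -/
theorem stmt3 (s : ℕ) (hs : 1 ≤ s) (p : ℝ) (hp0 : 0 < p) (hp1 : p < 1)
    (μ : Measure ℕ) [IsProbabilityMeasure μ]
    (hpmf : ∀ m : ℕ,
      μ {m} = ENNReal.ofReal (((m + s - 1).choose m : ℝ) * p ^ m * (1 - p) ^ s)) :
    (∫ m, ((s : ℝ) * (m : ℝ) + (m : ℝ) ^ 2) / ((s : ℝ) + 1) ∂μ)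
      = variance (fun m : ℕ => (m : ℝ)) μ := by
  have hp : ‖p‖ < 1 := by rwa [Real.norm_of_nonneg hp0.le]
  have hμ : ∀ m, μ.real {m} = negBinomialWeight s p m := fun m ↦ by
    rw [measureReal_def, hpmf, ENNReal.toReal_ofReal (by bound), negBinomialWeight]
  have h1 := hasSum_negBinomialWeight_mul_self hs hp
  have h2 := hasSum_negBinomialWeight_mul_sq hs hp
  simp only [← hμ] at h1 h2
  obtain ⟨hint1, hE1⟩ :=
    integrable_and_integral_eq_of_hasSum_measureReal_mul (fun m ↦ m.cast_nonneg) h1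
  obtain ⟨hint2, hE2⟩ :=
    integrable_and_integral_eq_of_hasSum_measureReal_mul (fun m ↦ by positivity) h2
  have hL2 : MemLp (fun m : ℕ ↦ (m : ℝ)) 2 μ :=
    (memLp_two_iff_integrable_sq (measurable_of_countable _).aestronglyMeasurable).2 hint2
  rw [integral_div, integral_add (hint1.const_mul _) hint2, integral_const_mul, hE1, hE2,
    variance_eq_sub hL2]
  simp only [Pi.pow_apply]
  rw [hE1, hE2]
  have hq : 1 - p ≠ 0 := (sub_pos.2 hp1).ne'
  field_simp
  ring
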